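/- arXiv:2002.07275 — 2 statements merged into one kernel-verified Lean document; each statement's English description precedes it below -/
import Mathlib

section
/- Let P be a closed path in Y, where Y has an edge-free G-action with quotient graph of groups 𝕏. Then the Frobenius element of the image path satisfies F(π(P)) = 1, and lifting the image starting on the ending sheet of P recovers P: π^{-1}(π(P), N(f̄_n)) = P, where f_n is the last half-edge of P. -/
structure LegGraph where
  V : Type
  H : Type
  [fV : Fintype V]
  [fH : Fintype H]
  [dV : DecidableEq V]
  [dH : DecidableEq H]
  r : H → V
  bar : H → H
  bar_bar : ∀ h, bar (bar h) = h

attribute [instance] LegGraph.fV LegGraph.fH LegGraph.dV LegGraph.dH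

namespace LegGraph

def IsClosedPath (X : LegGraph) {n : ℕ} (h : ZMod n → X.H) : Prop :=
  ∀ j, X.r (h (j + 1)) = X.r (X.bar (h j))

def IsReducedPath (X : LegGraph) {n : ℕ} (h : ZMod n → X.H) : Prop :=
  ∀ j, h (j + 1) ≠ X.bar (h j)

def HasPeriod (X : LegGraph) {n : ℕ} (h : ZMod n → X.H) (d : ℕ) : Prop :=
  ∀ j, h (j + (d : ZMod n)) = h j

def IsPrimitive (X : LegGraph) {n : ℕ} (h : ZMod n → X.H) : Prop :=
  ∀ d : ℕ, 0 < d → d ∣ n → X.HasPeriod h d → d = n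

end LegGraph

/-- An edge-free Galois covering of graphs with legs: a group `G` acting on a finite
graph `Y`, freely on half-edges, together with the quotient graph `X = Y/G`, a lifted
spanning tree (recorded via the vertex section `vT`), a choice of identity sheet
(recorded via the half-edge section `sec`) and the Frobenius elements `F(h)`, as in
the construction of the quotient graph of groups `𝕏 = Y ⫽ G`. -/
structure EdgeFreeCover where
  Y : LegGraph
  G : Type
  [grpG : Group G]
  [finG : Fintype G]
  [decG : DecidableEq G]
  act : G → Y.H → Y.H
  actV : G → Y.V → Y.V
  act_one : ∀ h, act 1 h = h
  act_mul : ∀ g g' h, act (g * g') h = act g (act g' h)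
  actV_one : ∀ v, actV 1 v = v
  actV_mul : ∀ g g' v, actV (g * g') v = actV g (actV g' v)
  act_r : ∀ g h, Y.r (act g h) = actV g (Y.r h)
  act_bar : ∀ g h, Y.bar (act g h) = act g (Y.bar h)
  free : ∀ g h, act g h = h → g = 1
  X : LegGraph
  πV : Y.V → X.V
  πH : Y.H → X.H
  πV_surj : Function.Surjective πV
  πH_r : ∀ f, X.r (πH f) = πV (Y.r f)
  πH_bar : ∀ f, X.bar (πH f) = πH (Y.bar f)
  πH_eq : ∀ f f', πH f = πH f' ↔ ∃ g, act g f = f'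
  πV_eq : ∀ v v', πV v = πV v' ↔ ∃ g, actV g v = v'
  vT : X.V → Y.V
  vT_sec : ∀ v, πV (vT v) = v
  sec : X.H → Y.H
  sec_sec : ∀ h, πH (sec h) = h
  sec_root : ∀ h, Y.r (sec h) = vT (X.r h)
  F : X.H → G
  F_bar : ∀ h, F (X.bar h) = (F h)⁻¹
  F_spec : ∀ h, act (F h) (sec (X.bar h)) = Y.bar (sec h)

attribute [instance] EdgeFreeCover.grpG EdgeFreeCover.finG EdgeFreeCover.decG

namespace EdgeFreeCover

variable (E : EdgeFreeCover)

/-- The sheet number `N(f)` of a half-edge `f` of `Y`: the unique `g ∈ G` with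
`g · (π f)^S = f`. -/
noncomputable def N (f : E.Y.H) : E.G :=
  Classical.choose ((E.πH_eq (E.sec (E.πH f)) f).mp (E.sec_sec (E.πH f)))

/-- Membership in the vertex group `X_v` of the quotient graph of groups:
the stabilizer of the chosen lift `v^T`. -/
def InStab (v : E.X.V) (g : E.G) : Prop := E.actV g (E.vT v) = E.vT v

/-- A closed path of length `n` in the quotient graph of groups `𝕏 = Y ⫽ G`,
recorded cyclically: half-edges `h j` and group elements `γ j` (with `γ j` the group
element immediately preceding `h j`), each lying in the vertex group at the root of
`h j`. -/
def IsClosedGPath {n : ℕ} (h : ZMod n → E.X.H) (γ : ZMod n → E.G) : Prop :=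
  E.X.IsClosedPath h ∧ ∀ j, E.InStab (E.X.r (h j)) (γ j)

/-- The path `g₀h₁g₁⋯g_{n-1}h_n` is reduced if for every `j` either `h_{j+1} ≠ h̄_j`
or the intervening group element is nontrivial. -/
def IsReducedGPath {n : ℕ} (h : ZMod n → E.X.H) (γ : ZMod n → E.G) : Prop :=
  ∀ j, h (j + 1) ≠ E.X.bar (h j) ∨ γ (j + 1) ≠ 1

/-- A closed path in `𝕏` has period `d` if it is invariant under rotation by `d`. -/
def GPathHasPeriod {n : ℕ} (h : ZMod n → E.X.H) (γ : ZMod n → E.G) (d : ℕ) : Prop :=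
  ∀ j, h (j + (d : ZMod n)) = h j ∧ γ (j + (d : ZMod n)) = γ j

/-- A closed path in `𝕏` is primitive if it is not a proper power. -/
def GPathIsPrimitive {n : ℕ} (h : ZMod n → E.X.H) (γ : ZMod n → E.G) : Prop :=
  ∀ d : ℕ, 0 < d → d ∣ n → E.GPathHasPeriod h γ d → d = n

/-- The Frobenius element `F(P) = g₀F(h₁)g₁F(h₂)⋯g_{n-1}F(h_n)` of a closed path
in `𝕏` (with chosen basepoint). -/
def Frob {n : ℕ} (h : ZMod n → E.X.H) (γ : ZMod n → E.G) : E.G :=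
  (((List.range n).map fun i => γ (i : ZMod n) * E.F (h (i : ZMod n)))).prod

/-- The lift `π⁻¹(Q, s)` of a closed path `Q` in `𝕏` starting on the `s`-th sheet:
its `j`-th half-edge is `s · F(g₀h₁⋯h_j g_j) · h_{j+1}^S`. -/
def liftPath {n : ℕ} (h : ZMod n → E.X.H) (γ : ZMod n → E.G) (s : E.G)
    (j : ZMod n) : E.Y.H :=
  E.act (s * (((List.range j.val).map fun i => γ (i : ZMod n) * E.F (h (i : ZMod n)))).prod
      * γ j) (E.sec (h j))

/-- The half-edge components of the image `π(P)` of a closed path `P` in `Y`. -/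
def imgH {n : ℕ} (f : ZMod n → E.Y.H) (j : ZMod n) : E.X.H := E.πH (f j)

/-- The group components of the image `π(P)` of a closed path `P` in `Y`:
`g_j = F(h_j)⁻¹ N(f_j)⁻¹ N(f_{j+1})` (cyclically, with `g₀ = F(h_n)⁻¹N(f_n)⁻¹N(f₁)`). -/
noncomputable def imgG {n : ℕ} (f : ZMod n → E.Y.H) (j : ZMod n) : E.G :=
  (E.F (E.πH (f (j - 1))))⁻¹ * (E.N (f (j - 1)))⁻¹ * E.N (f j)

end EdgeFreeCover

/-! Writing `φ j = N(f̄_j)`, the relation `N(f̄) = N(f) F(π f)` turns each factor `g_j F(h_j)`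
of the Frobenius element of `π(P)` into `φ (j-1)⁻¹ φ j`, so every partial product telescopes to
`φ(-1)⁻¹ φ(k-1)`. For `k = n` this is `1`; multiplied on the left by the starting sheet `φ(-1)` and
on the right by `g_j = φ(j-1)⁻¹ N(f_j)` it leaves `N(f_j)`, the sheet of `f_j`. -/

theorem List.prod_range_inv_mul_telescope {G R : Type*} [Group G] [AddGroupWithOne R]
    (φ : R → G) (k : ℕ) :
    ((List.range k).map fun i : ℕ => (φ ((i : R) - 1))⁻¹ * φ i).prod
      = (φ (-1))⁻¹ * φ ((k : R) - 1) := by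
  have h := List.prod_range_div' k fun i : ℕ => (φ ((i : R) - 1))⁻¹
  simpa [div_eq_mul_inv] using h

namespace EdgeFreeCover

variable (E : EdgeFreeCover)

def partialFrob {n : ℕ} (h : ZMod n → E.X.H) (γ : ZMod n → E.G) (k : ℕ) : E.G :=
  ((List.range k).map fun i : ℕ => γ i * E.F (h i)).prod

theorem frob_eq_partialFrob {n : ℕ} (h : ZMod n → E.X.H) (γ : ZMod n → E.G) :
    E.Frob h γ = E.partialFrob h γ n := by
  simp only [Frob, partialFrob, List.pure_def, List.bind_eq_flatMap, ← List.map_eq_flatMap,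
    List.map_map]
  rfl

theorem liftPath_eq_act_partialFrob {n : ℕ} (h : ZMod n → E.X.H) (γ : ZMod n → E.G)
    (s : E.G) (j : ZMod n) :
    E.liftPath h γ s j = E.act (s * E.partialFrob h γ j.val * γ j) (E.sec (h j)) := by
  simp only [liftPath, partialFrob, List.pure_def, List.bind_eq_flatMap, ← List.map_eq_flatMap,
    List.map_map]
  rfl

theorem act_N_sec (f : E.Y.H) : E.act (E.N f) (E.sec (E.πH f)) = f :=
  Classical.choose_spec ((E.πH_eq (E.sec (E.πH f)) f).mp (E.sec_sec (E.πH f)))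

theorem act_left_injective (x : E.Y.H) : Function.Injective fun g => E.act g x := by
  intro g g' h
  have hfix : E.act (g'⁻¹ * g) x = x := by
    simp only [E.act_mul, h, ← E.act_mul, inv_mul_cancel, E.act_one]
  exact (inv_mul_eq_one.mp (E.free _ _ hfix)).symm

theorem N_bar (f : E.Y.H) : E.N (E.Y.bar f) = E.N f * E.F (E.πH f) := by
  apply E.act_left_injective (E.sec (E.πH (E.Y.bar f)))
  dsimp only
  rw [E.act_N_sec, ← E.πH_bar, E.act_mul, E.F_spec, ← E.act_bar, E.act_N_sec]

theorem imgG_eq {n : ℕ} (f : ZMod n → E.Y.H) (j : ZMod n) :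
    E.imgG f j = (E.N (E.Y.bar (f (j - 1))))⁻¹ * E.N (f j) := by
  simp only [imgG, E.N_bar, mul_inv_rev]

theorem partialFrob_img {n : ℕ} (f : ZMod n → E.Y.H) (k : ℕ) :
    E.partialFrob (E.imgH f) (E.imgG f) k
      = (E.N (E.Y.bar (f (-1))))⁻¹ * E.N (E.Y.bar (f ((k : ZMod n) - 1))) := by
  have hstep (j : ZMod n) : E.imgG f j * E.F (E.imgH f j)
      = (E.N (E.Y.bar (f (j - 1))))⁻¹ * E.N (E.Y.bar (f j)) := by
    rw [E.imgG_eq, imgH, mul_assoc, ← E.N_bar]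
  simp only [partialFrob, hstep]
  exact List.prod_range_inv_mul_telescope (fun j => E.N (E.Y.bar (f j))) k

end EdgeFreeCover

theorem image_frob_and_lift_general (E : EdgeFreeCover) (n : ℕ) (hn : 1 ≤ n)
    (f : ZMod n → E.Y.H) :
    E.Frob (E.imgH f) (E.imgG f) = 1 ∧
    ∀ j, E.liftPath (E.imgH f) (E.imgG f) (E.N (E.Y.bar (f (-1)))) j = f j := by
  -- in `ZMod 0 = ℤ` the lift would be indexed by `j.val = |j|`, not by `j`
  have : NeZero n := ⟨by omega⟩
  refine ⟨?_, fun j => ?_⟩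
  · rw [E.frob_eq_partialFrob, E.partialFrob_img, ZMod.natCast_self, zero_sub, inv_mul_cancel]
  · rw [E.liftPath_eq_act_partialFrob, E.partialFrob_img, ZMod.natCast_zmod_val, E.imgG_eq,
      mul_inv_cancel_left, mul_inv_cancel_left]
    exact E.act_N_sec (f j)

/-- For a closed path `P = f₁⋯f_n` in `Y`, the Frobenius element of its
image satisfies `F(π(P)) = 1`, and lifting the image starting on the ending sheet
`N(f̄_n)` of `P` recovers `P`: `π⁻¹(π(P), N(f̄_n)) = P`. (Here `f_n = f(-1)` in the
cyclic indexing by `ZMod n`.) -/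
theorem image_frob_and_lift (E : EdgeFreeCover) (n : ℕ) (hn : 1 ≤ n)
    (f : ZMod n → E.Y.H) (hf : E.Y.IsClosedPath f) :
    E.Frob (E.imgH f) (E.imgG f) = 1 ∧
    ∀ j, E.liftPath (E.imgH f) (E.imgG f) (E.N (E.Y.bar (f (-1)))) j = f j :=
  image_frob_and_lift_general E n hn f
end

section
/- Let G act edge-freely on a finite graph Y with quotient graph of groups 𝕏. Then ζ(u,𝕏) divides ζ(u,Y), in the sense that ζ(u,Y)/ζ(u,𝕏) = ∏_{ρ ≠ 1 irreducible} L(u,ρ,Y/𝕏)^{d_ρ}, where the product is over nontrivial irreducible representations of G with multiplicities d_ρ = dim ρ; equivalently, the polynomial ζ(u,𝕏)^{-1} divides the polynomial ζ(u,Y)^{-1}. -/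
open Polynomial

namespace EdgeFreeCover

variable (E : EdgeFreeCover)

/-- The half-edge matrix of the graph `Y` itself (all charges 1), so that
`ζ(u,Y)⁻¹ = det(I - W_Y u)` by the two-term determinant formula. -/
def WY : Matrix E.Y.H E.Y.H ℤ := fun f f' =>
  if f' = E.Y.bar f then 0
  else if E.Y.r (E.Y.bar f) = E.Y.r f' then 1 else 0

/-- The half-edge adjacency matrix `W` of the quotient graph of groups `𝕏 = Y ⫽ G`,
whose charges are the orders of the vertex stabilizers, so that
`ζ(u,𝕏)⁻¹ = det(I - W u)` by the two-term determinant formula. -/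
noncomputable def Wquot : Matrix E.X.H E.X.H ℤ := fun h h' =>
  if h' = E.X.bar h then
    (Nat.card {g : E.G // E.InStab (E.X.r h') g} : ℤ) - 1
  else if E.X.r (E.X.bar h) = E.X.r h' then
    (Nat.card {g : E.G // E.InStab (E.X.r h') g} : ℤ)
  else 0

end EdgeFreeCover


/-!
Let `S` be the matrix with `S h f = 1` if the half-edge `f` of `Y` lies over `h`, else `0`.
Then `S W_Y = W_𝕏 S`: summing the row of `W_Y` over the `|G|` lifts `g · hˢ` of `h`, the
entry at a half-edge `f` over `h'` counts the `g` carrying the root of the lift of `h̄` to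
the root of `f` (a coset of a vertex stabiliser when the roots of `h̄` and `h'` agree),
minus the single `g` with `g · h̄ˢ = f` (when `h' = h̄`); this is the charge of `W_𝕏`.
Choosing one lift per fibre, `S = [1 | B]` up to reordering, and conjugating `1 - u W_Y`
by `[[1, B], [0, 1]]` makes it block lower triangular with diagonal block `1 - u W_𝕏`.
-/

namespace Matrix

theorem det_dvd_det_of_fromCols_mul_eq {m k R : Type*} [Fintype m] [Fintype k] [DecidableEq m]
    [DecidableEq k] [CommRing R] (M : Matrix (m ⊕ k) (m ⊕ k) R) (A : Matrix m m R)
    (B : Matrix m k R) (h : fromCols (1 : Matrix m m R) B * M = A * fromCols 1 B) :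
    A.det ∣ M.det := by
  set U : Matrix (m ⊕ k) (m ⊕ k) R := fromBlocks 1 B 0 1
  set V : Matrix (m ⊕ k) (m ⊕ k) R := fromBlocks 1 (-B) 0 1
  have hUV : U * V = 1 := by simp [U, V, fromBlocks_multiply, fromBlocks_one]
  rw [← fromBlocks_toBlocks M, fromCols_mul_fromBlocks, mul_fromCols, fromCols_inj.eq_iff] at h
  simp only [Matrix.one_mul, Matrix.mul_one] at h
  obtain ⟨h₁₁, h₁₂⟩ := h
  have hconj :
      U * M * V = fromBlocks A 0 M.toBlocks₂₁ (M.toBlocks₂₂ - M.toBlocks₂₁ * B) := by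
    conv_lhs => rw [← fromBlocks_toBlocks M]
    simp only [U, V, fromBlocks_multiply, Matrix.one_mul, Matrix.mul_one, Matrix.zero_mul,
      Matrix.mul_zero, zero_add, add_zero, Matrix.mul_neg, h₁₁, h₁₂, neg_add_cancel,
      neg_add_eq_sub]
  have hdet : M.det = (U * M * V).det := by
    rw [det_mul, det_mul, mul_comm U.det, mul_assoc, ← det_mul, hUV, det_one, mul_one]
  rw [hdet, hconj, det_fromBlocks_zero₁₂]
  exact dvd_mul_right _ _

def fiberMatrix (R : Type*) [Zero R] [One R] {m n : Type*} [DecidableEq m] (π : n → m) :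
    Matrix m n R :=
  of fun i j => if π j = i then 1 else 0

theorem fiberMatrix_map {R S m n : Type*} [NonAssocSemiring R] [NonAssocSemiring S]
    [DecidableEq m] (π : n → m) (f : R →+* S) :
    (fiberMatrix R π).map f = fiberMatrix S π := by
  ext i j
  simp [fiberMatrix, apply_ite f]

theorem det_dvd_det_of_fiberMatrix_mul_eq {m n R : Type*} [Fintype m] [Fintype n]
    [DecidableEq m] [DecidableEq n] [CommRing R] {π : n → m} (hπ : Function.Surjective π)
    {M : Matrix n n R} {A : Matrix m m R} (h : fiberMatrix R π * M = A * fiberMatrix R π) :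
    A.det ∣ M.det := by
  classical
  set σ := Function.surjInv hπ
  let e : m ⊕ {j // j ∉ Set.range σ} ≃ n :=
    (Equiv.sumCongr (Equiv.ofInjective σ (Function.injective_surjInv hπ)) (Equiv.refl _)).trans
      (Equiv.sumCompl _)
  have hS : (fiberMatrix R π).submatrix id e =
      fromCols 1 ((fiberMatrix R π).submatrix id (e ∘ Sum.inr)) := by
    ext i (i' | j) <;> simp [fiberMatrix, e, σ, Function.surjInv_eq, one_apply, eq_comm]
  rw [← det_submatrix_equiv_self e M]
  apply det_dvd_det_of_fromCols_mul_eq _ A _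
  rw [← hS, submatrix_mul_equiv, h, submatrix_mul _ _ _ _ _ Function.bijective_id,
    submatrix_id_id]

end Matrix

namespace EdgeFreeCover

variable (E : EdgeFreeCover)

theorem act_left_injective_s14 (f : E.Y.H) : Function.Injective (E.act · f) := by
  intro g g' (h : E.act g f = E.act g' f)
  have hfix : E.act (g'⁻¹ * g) f = f := by
    rw [E.act_mul, h, ← E.act_mul, inv_mul_cancel, E.act_one]
  rw [← inv_mul_eq_one.mp (E.free _ _ hfix)]

theorem πH_act_sec (g : E.G) (h : E.X.H) : E.πH (E.act g (E.sec h)) = h := by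
  rw [← (E.πH_eq _ _).mpr ⟨g, rfl⟩, E.sec_sec]

theorem πV_actV (g : E.G) (v : E.Y.V) : E.πV (E.actV g v) = E.πV v :=
  ((E.πV_eq _ _).mpr ⟨g, rfl⟩).symm

theorem bar_act_sec (g : E.G) (h : E.X.H) :
    E.Y.bar (E.act g (E.sec h)) = E.act (g * E.F h) (E.sec (E.X.bar h)) := by
  rw [E.act_bar, ← E.F_spec, ← E.act_mul]

theorem sum_fiber_πH {β : Type*} [AddCommMonoid β] (φ : E.Y.H → β) (h : E.X.H) :
    ∑ f with E.πH f = h, φ f = ∑ g, φ (E.act g (E.sec h)) := by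
  have hfiber : ({f | E.πH f = h} : Finset E.Y.H) = Finset.univ.image (E.act · (E.sec h)) := by
    ext f
    simp only [Finset.mem_filter, Finset.mem_univ, true_and, Finset.mem_image]
    constructor
    · rintro rfl
      exact (E.πH_eq _ f).mp (E.sec_sec _)
    · rintro ⟨g, rfl⟩
      exact E.πH_act_sec g h
  rw [hfiber, Finset.sum_image fun _ _ _ _ hg => E.act_left_injective_s14 _ hg]

theorem sum_boole_eq_act_sec (h : E.X.H) (f : E.Y.H) :
    ∑ g, (if f = E.act g (E.sec h) then 1 else 0 : ℤ) = if E.πH f = h then 1 else 0 := by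
  split_ifs with hf
  · obtain ⟨g₀, rfl⟩ := (E.πH_eq (E.sec h) f).mp (by rw [E.sec_sec, hf])
    have hiff : ∀ g, E.act g₀ (E.sec h) = E.act g (E.sec h) ↔ g₀ = g :=
      fun g => (E.act_left_injective_s14 _).eq_iff
    simp only [hiff, Finset.sum_ite_eq, Finset.mem_univ, if_true]
  · refine Finset.sum_eq_zero fun g _ => if_neg ?_
    rintro rfl
    exact hf (E.πH_act_sec g h)

theorem natCard_stab_eq_sum_boole (w : E.X.V) :
    (Nat.card {g : E.G // E.InStab w g} : ℤ) =
      ∑ g, if E.actV g (E.vT w) = E.vT w then 1 else 0 := by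
  classical
  simp [Nat.card_eq_fintype_card, Fintype.card_subtype, Finset.sum_boole, InStab]

theorem sum_boole_actV_vT_eq (w : E.X.V) (v : E.Y.V) :
    ∑ g, (if E.actV g (E.vT w) = v then 1 else 0 : ℤ)
      = if E.πV v = w then (Nat.card {g : E.G // E.InStab w g} : ℤ) else 0 := by
  split_ifs with hv
  · obtain ⟨g₀, rfl⟩ := (E.πV_eq (E.vT w) v).mp (by rw [E.vT_sec, hv])
    rw [E.natCard_stab_eq_sum_boole]
    refine Fintype.sum_equiv (Equiv.mulLeft g₀⁻¹) _ _ fun g => ?_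
    have hcancel : E.actV (g₀⁻¹ * g) (E.vT w) = E.vT w ↔
        E.actV g (E.vT w) = E.actV g₀ (E.vT w) := by
      rw [E.actV_mul]
      constructor
      · intro h; rw [← E.actV_one (E.actV g _), ← mul_inv_cancel g₀, E.actV_mul, h]
      · intro h; rw [h, ← E.actV_mul g₀⁻¹, inv_mul_cancel, E.actV_one]
    simp only [Equiv.coe_mulLeft, hcancel]
  · refine Finset.sum_eq_zero fun g _ => if_neg ?_
    rintro rfl
    exact hv (by rw [E.πV_actV, E.vT_sec])

theorem WY_apply (f f' : E.Y.H) :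
    E.WY f f' =
      (if E.Y.r (E.Y.bar f) = E.Y.r f' then 1 else 0) - if f' = E.Y.bar f then 1 else 0 := by
  unfold WY
  split_ifs <;> simp_all

theorem Wquot_apply (h h' : E.X.H) :
    E.Wquot h h' = (if E.X.r (E.X.bar h) = E.X.r h' then
        (Nat.card {g : E.G // E.InStab (E.X.r h') g} : ℤ) else 0) -
      if h' = E.X.bar h then 1 else 0 := by
  unfold Wquot
  split_ifs <;> simp_all

theorem fiberMatrix_mul_WY :
    Matrix.fiberMatrix ℤ E.πH * E.WY = E.Wquot * Matrix.fiberMatrix ℤ E.πH := by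
  ext h f
  obtain ⟨w, hw⟩ : ∃ w, E.X.r (E.X.bar h) = w := ⟨_, rfl⟩
  calc (Matrix.fiberMatrix ℤ E.πH * E.WY) h f
      = ∑ g, E.WY (E.act g (E.sec h)) f := by
        simp only [Matrix.mul_apply, Matrix.fiberMatrix, Matrix.of_apply, ite_mul, one_mul,
          zero_mul, ← Finset.sum_filter, E.sum_fiber_πH]
    _ = ∑ g, ((if E.actV (g * E.F h) (E.vT w) = E.Y.r f then 1 else 0)
          - if f = E.act (g * E.F h) (E.sec (E.X.bar h)) then 1 else 0) := by
        simp only [WY_apply, bar_act_sec, act_r, sec_root, hw]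
    _ = ∑ g, (if E.actV g (E.vT w) = E.Y.r f then 1 else 0)
          - ∑ g, if f = E.act g (E.sec (E.X.bar h)) then 1 else 0 := by
        rw [← Finset.sum_sub_distrib]
        exact Fintype.sum_equiv (Equiv.mulRight (E.F h)) _ _ fun g => rfl
    _ = (if E.πV (E.Y.r f) = w then (Nat.card {g : E.G // E.InStab w g} : ℤ) else 0)
          - if E.πH f = E.X.bar h then 1 else 0 := by
        rw [sum_boole_actV_vT_eq, sum_boole_eq_act_sec]
    _ = E.Wquot h (E.πH f) := by
        rw [Wquot_apply, E.πH_r]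
        by_cases hv : E.πV (E.Y.r f) = w
        · simp [hv, hw]
        · simp [hv, hw, Ne.symm hv]
    _ = (E.Wquot * Matrix.fiberMatrix ℤ E.πH) h f := by
        simp [Matrix.mul_apply, Matrix.fiberMatrix]

end EdgeFreeCover

/-- For an edge-free action of `G` on a finite graph `Y` with quotient
graph of groups `𝕏 = Y ⫽ G`, the zeta function `ζ(u,𝕏)` divides `ζ(u,Y)`;
equivalently, the polynomial `ζ(u,𝕏)⁻¹ = det(I - W_𝕏 u)` divides the polynomial
`ζ(u,Y)⁻¹ = det(I - W_Y u)`. -/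
theorem zeta_quotient_divides (E : EdgeFreeCover) :
    Matrix.det (1 - (X : Polynomial ℤ) • (E.Wquot.map Polynomial.C)) ∣
    Matrix.det (1 - (X : Polynomial ℤ) • (E.WY.map Polynomial.C)) := by
  refine Matrix.det_dvd_det_of_fiberMatrix_mul_eq (fun h => ⟨E.sec h, E.sec_sec h⟩) ?_
  have hS := congrArg (Matrix.map · Polynomial.C) E.fiberMatrix_mul_WY
  simp only [Matrix.map_mul, Matrix.fiberMatrix_map] at hS
  rw [Matrix.mul_sub, Matrix.sub_mul, Matrix.mul_one, Matrix.one_mul, Matrix.mul_smul,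
    Matrix.smul_mul, hS]
end
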